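/- (Theorem 1, closed-loop performance bound) Under Assumptions 1 and 2 with ρ > 0 and γ := C/(1−ρ) > 1, let V̄ > 0, M ≥ 1, N > N_M, and ε_{N,M} := 1 − C²ρ_γ^{N−N₀}ρ^M/(1−ρ^M) > 0. Then for every initial condition x₀ with V_{N,M}(x₀) ≤ V̄, the closed loop x(t+1) = f(x(t), u(t)) with u(t) = u*(0|t) (the first element of a minimizing input sequence for V_{N,M}(x(t))) satisfies Σ_{k=0}^{∞} ℓ(x(k), u(k)) ≤ V_{N,M}(x₀)/ε_{N,M}. -/

import Mathlib

/-!
Let `V k` be the cost, from step `k` on, of an optimal plan `u` for `V_{N,M}(x)`. Splicing in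
the local controller `κ` at a step `k` with `ℓ_min(x_k) ≤ ε` is admissible, so by optimality
`V k ≤ γ ℓ_min(x_k)`. Hence every optimal stage cost is at least `min ε (V k / γ)`: `V` drops by
`ε` per step until it is below `γ ε` and then contracts by the factor `ρ_γ`. The choice of `N`
makes the terminal tail `V N` at most `ε` and at most `ρ_γ^(N-N₀) γ ℓ(x, u 0)`, and the decay of
Assumption 2 along that tail bounds the stage cost of one more `κ`-step by
`(1 - ε_{N,M}) ℓ(x, u 0)`. Shifting the optimal plan and appending that step gives
`V_{N,M}(x⁺) + ε_{N,M} ℓ(x, u 0) ≤ V_{N,M}(x)`, which telescopes along the closed loop.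
-/

open Finset Filter
open scoped ENNReal

noncomputable section

open scoped Classical

/-- State/input spaces are Euclidean spaces. -/
abbrev Vec (n : ℕ) := EuclideanSpace ℝ (Fin n)

/-- Open-loop state trajectory: `x(0) = x`, `x(k+1) = f(x(k), u(k))`. -/
def traj {n m : ℕ} (f : Vec n → Vec m → Vec n) (x : Vec n) (u : ℕ → Vec m) : ℕ → Vec n
  | 0 => x
  | k + 1 => f (traj f x u k) (u k)

/-- Closed-loop state trajectory under the feedback `κ` (the map `φ_x(·, x)`). -/
def phiX {n m : ℕ} (f : Vec n → Vec m → Vec n) (κ : Vec n → Vec m) (x : Vec n) : ℕ → Vec n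
  | 0 => x
  | k + 1 => f (phiX f κ x k) (κ (phiX f κ x k))

/-- `ℓ_min(x) := inf_{u ∈ U} ℓ(x, u)`. -/
def lmin {n m : ℕ} (ℓ : Vec n → Vec m → ℝ) (Uset : Set (Vec m)) (x : Vec n) : ℝ :=
  sInf ((fun u => ℓ x u) '' Uset)

/-- Finite-tail cost `V_{f,M}(x)`: sum of the stage cost along the κ-closed loop if the
constraints are satisfied along the tail, and `+∞` otherwise (for `M = 0` it equals `0`). -/
def Vtail {n m : ℕ} (f : Vec n → Vec m → Vec n) (κ : Vec n → Vec m)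
    (ℓ : Vec n → Vec m → ℝ) (Z : Set (Vec n × Vec m)) (M : ℕ) (x : Vec n) : ℝ≥0∞ :=
  if ∀ k < M, (phiX f κ x k, κ (phiX f κ x k)) ∈ Z then
    ENNReal.ofReal (∑ k ∈ Finset.range M, ℓ (phiX f κ x k) (κ (phiX f κ x k)))
  else ⊤

/-- Feasibility of the input sequence `u` over horizon `N` from state `x`. -/
def Feasible {n m : ℕ} (f : Vec n → Vec m → Vec n) (Z : Set (Vec n × Vec m))
    (Uset : Set (Vec m)) (N : ℕ) (x : Vec n) (u : ℕ → Vec m) : Prop :=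
  ∀ k < N, u k ∈ Uset ∧ (traj f x u k, u k) ∈ Z

/-- MPC open-loop cost `J_{N,M}` of the input sequence `u` from state `x`. -/
def Jcost {n m : ℕ} (f : Vec n → Vec m → Vec n) (κ : Vec n → Vec m)
    (ℓ : Vec n → Vec m → ℝ) (Z : Set (Vec n × Vec m)) (N M : ℕ) (x : Vec n)
    (u : ℕ → Vec m) : ℝ≥0∞ :=
  ENNReal.ofReal (∑ k ∈ Finset.range N, ℓ (traj f x u k) (u k)) +
    Vtail f κ ℓ Z M (traj f x u N)

/-- MPC value function `V_{N,M}(x)` (equal to `+∞` if the problem is infeasible). -/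
def Vmpc {n m : ℕ} (f : Vec n → Vec m → Vec n) (κ : Vec n → Vec m)
    (ℓ : Vec n → Vec m → ℝ) (Z : Set (Vec n × Vec m)) (Uset : Set (Vec m))
    (N M : ℕ) (x : Vec n) : ℝ≥0∞ :=
  ⨅ (u : ℕ → Vec m) (_ : Feasible f Z Uset N x u), Jcost f κ ℓ Z N M x u

/-- `u` is a minimizing (optimal) input sequence for `V_{N,M}(x)`. -/
def IsMinimizer {n m : ℕ} (f : Vec n → Vec m → Vec n) (κ : Vec n → Vec m)
    (ℓ : Vec n → Vec m → ℝ) (Z : Set (Vec n × Vec m)) (Uset : Set (Vec m))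
    (N M : ℕ) (x : Vec n) (u : ℕ → Vec m) : Prop :=
  Feasible f Z Uset N x u ∧ Vmpc f κ ℓ Z Uset N M x = Jcost f κ ℓ Z N M x u

/-- Infinite-horizon optimal cost `V_{∞,0}(x)`. -/
def Vinf {n m : ℕ} (f : Vec n → Vec m → Vec n) (ℓ : Vec n → Vec m → ℝ)
    (Z : Set (Vec n × Vec m)) (Uset : Set (Vec m)) (x : Vec n) : ℝ≥0∞ :=
  ⨅ (u : ℕ → Vec m) (_ : ∀ k, u k ∈ Uset ∧ (traj f x u k, u k) ∈ Z),
    ∑' k : ℕ, ENNReal.ofReal (ℓ (traj f x u k) (u k))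

/-- Assumption 2 (locally stabilizing controller): exponential decay of the stage
cost along the κ-closed loop and constraint satisfaction, locally (`ℓ_min(x) ≤ ε`). -/
def Assumption2 {n m : ℕ} (f : Vec n → Vec m → Vec n) (κ : Vec n → Vec m)
    (ℓ : Vec n → Vec m → ℝ) (Z : Set (Vec n × Vec m)) (Uset : Set (Vec m))
    (ρ C ε : ℝ) : Prop :=
  ρ ∈ Set.Ico (0 : ℝ) 1 ∧ 1 ≤ C ∧ 0 < ε ∧
    ∀ x : Vec n, lmin ℓ Uset x ≤ ε → ∀ k : ℕ,
      ℓ (phiX f κ x k) (κ (phiX f κ x k)) ≤ C * ρ ^ k * lmin ℓ Uset x ∧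
      (phiX f κ x k, κ (phiX f κ x k)) ∈ Z

/-- A class-`K∞` function: continuous, strictly increasing and unbounded on `[0,∞)`
with `α(0) = 0`. -/
def IsKInfty (α : ℝ → ℝ) : Prop :=
  ContinuousOn α (Set.Ici 0) ∧ StrictMonoOn α (Set.Ici 0) ∧ α 0 = 0 ∧
    Tendsto α atTop atTop

section Trajectories

variable {n m : ℕ} (f : Vec n → Vec m → Vec n) (κ : Vec n → Vec m)

theorem phiX_add (x : Vec n) (k j : ℕ) :
    phiX f κ x (k + j) = phiX f κ (phiX f κ x k) j := by
  induction j with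
  | zero => rfl
  | succ j ih => rw [← Nat.add_assoc, phiX, ih, phiX]

theorem traj_congr (x : Vec n) {u v : ℕ → Vec m} {j : ℕ} (h : ∀ i < j, u i = v i) :
    traj f x u j = traj f x v j := by
  induction j with
  | zero => rfl
  | succ j ih =>
    rw [traj, traj, ih fun i hi => h i (hi.trans j.lt_succ_self), h j j.lt_succ_self]

theorem traj_shift (x : Vec n) (u : ℕ → Vec m) (j : ℕ) :
    traj f (f x (u 0)) (fun i => u (i + 1)) j = traj f x u (j + 1) := by
  induction j with
  | zero => rfl
  | succ j ih => rw [traj, ih]; rfl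

def splice (x : Vec n) (u : ℕ → Vec m) (k : ℕ) : ℕ → Vec m :=
  fun j => if j < k then u j else κ (phiX f κ (traj f x u k) (j - k))

variable {f κ}

theorem splice_of_lt {x : Vec n} {u : ℕ → Vec m} {k j : ℕ} (hj : j < k) :
    splice f κ x u k j = u j := if_pos hj

theorem splice_add (x : Vec n) (u : ℕ → Vec m) (k i : ℕ) :
    splice f κ x u k (k + i) = κ (phiX f κ (traj f x u k) i) := by
  rw [splice, if_neg (by omega), Nat.add_sub_cancel_left]

theorem traj_splice_of_le {x : Vec n} {u : ℕ → Vec m} {k j : ℕ} (hj : j ≤ k) :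
    traj f x (splice f κ x u k) j = traj f x u j :=
  traj_congr f x fun _ hi => splice_of_lt (hi.trans_le hj)

theorem traj_splice_add (x : Vec n) (u : ℕ → Vec m) (k i : ℕ) :
    traj f x (splice f κ x u k) (k + i) = phiX f κ (traj f x u k) i := by
  induction i with
  | zero => exact traj_splice_of_le le_rfl
  | succ i ih => rw [← Nat.add_assoc, traj, ih, splice_add, phiX]

end Trajectories

section Costs

variable {n m : ℕ} (f : Vec n → Vec m → Vec n) (κ : Vec n → Vec m)
  (ℓ : Vec n → Vec m → ℝ) (Z : Set (Vec n × Vec m))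

def loopCost (y : Vec n) (K : ℕ) : ℝ :=
  ∑ i ∈ range K, ℓ (phiX f κ y i) (κ (phiX f κ y i))

def LoopAdmissible (y : Vec n) (K : ℕ) : Prop :=
  ∀ i < K, (phiX f κ y i, κ (phiX f κ y i)) ∈ Z

variable {f κ ℓ Z}

theorem loopCost_nonneg (hℓ0 : ∀ x u, 0 ≤ ℓ x u) (y : Vec n) (K : ℕ) :
    0 ≤ loopCost f κ ℓ y K :=
  sum_nonneg fun _ _ => hℓ0 _ _

theorem loopCost_add (y : Vec n) (a b : ℕ) :
    loopCost f κ ℓ y (a + b) = loopCost f κ ℓ y a + loopCost f κ ℓ (phiX f κ y a) b := by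
  simp only [loopCost, sum_range_add, phiX_add]

theorem loopCost_succ (y : Vec n) (K : ℕ) :
    loopCost f κ ℓ y (K + 1) =
      loopCost f κ ℓ y K + ℓ (phiX f κ y K) (κ (phiX f κ y K)) :=
  sum_range_succ _ _

theorem LoopAdmissible.phiX {y : Vec n} {a b : ℕ} (h : LoopAdmissible f κ Z y (a + b)) :
    LoopAdmissible f κ Z (phiX f κ y a) b := fun i hi => by
  rw [← phiX_add]; exact h (a + i) (by omega)

theorem Vtail_of_loopAdmissible {M : ℕ} {y : Vec n} (h : LoopAdmissible f κ Z y M) :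
    Vtail f κ ℓ Z M y = ENNReal.ofReal (loopCost f κ ℓ y M) :=
  if_pos h

theorem loopAdmissible_of_Vtail_ne_top {M : ℕ} {y : Vec n} (h : Vtail f κ ℓ Z M y ≠ ⊤) :
    LoopAdmissible f κ Z y M := by
  by_contra hy
  exact h (if_neg hy)

variable {Uset : Set (Vec m)}

theorem Feasible.Vmpc_le_splice (hℓ0 : ∀ x u, 0 ≤ ℓ x u) (hκU : ∀ y, κ y ∈ Uset)
    {N M k : ℕ} (hkN : k ≤ N) {x : Vec n} {u : ℕ → Vec m} (hu : Feasible f Z Uset k x u)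
    (hadm : LoopAdmissible f κ Z (traj f x u k) (N - k + M)) :
    Vmpc f κ ℓ Z Uset N M x ≤ ENNReal.ofReal (∑ j ∈ range k, ℓ (traj f x u j) (u j) +
      loopCost f κ ℓ (traj f x u k) (N - k + M)) := by
  obtain ⟨d, rfl⟩ : ∃ d, N = k + d := ⟨N - k, by omega⟩
  rw [Nat.add_sub_cancel_left] at hadm ⊢
  have hw : Feasible f Z Uset (k + d) x (splice f κ x u k) := by
    intro j hj
    rcases lt_or_ge j k with hjk | hjk
    · rw [splice_of_lt hjk, traj_splice_of_le hjk.le]; exact hu j hjk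
    · obtain ⟨i, rfl⟩ : ∃ i, j = k + i := ⟨j - k, by omega⟩
      rw [splice_add, traj_splice_add]
      exact ⟨hκU _, hadm i (by omega)⟩
  have hstages : ∑ j ∈ range (k + d),
      ℓ (traj f x (splice f κ x u k) j) (splice f κ x u k j) =
      ∑ j ∈ range k, ℓ (traj f x u j) (u j) + loopCost f κ ℓ (traj f x u k) d := by
    rw [sum_range_add]
    congr 1
    · refine sum_congr rfl fun j hj => ?_
      have hjk := mem_range.mp hj
      rw [splice_of_lt hjk, traj_splice_of_le hjk.le]
    · exact sum_congr rfl fun i _ => by rw [splice_add, traj_splice_add]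
  calc Vmpc f κ ℓ Z Uset (k + d) M x ≤ Jcost f κ ℓ Z (k + d) M x (splice f κ x u k) :=
        iInf₂_le _ hw
    _ = _ := by
      rw [Jcost, traj_splice_add, Vtail_of_loopAdmissible hadm.phiX, hstages,
        ← ENNReal.ofReal_add (add_nonneg (sum_nonneg fun _ _ => hℓ0 _ _)
          (loopCost_nonneg hℓ0 _ _)) (loopCost_nonneg hℓ0 _ _), loopCost_add, add_assoc]

end Costs

section Lmin

variable {n m : ℕ} {ℓ : Vec n → Vec m → ℝ} {Uset : Set (Vec m)}

theorem lmin_nonneg (hℓ0 : ∀ x u, 0 ≤ ℓ x u) (x : Vec n) : 0 ≤ lmin ℓ Uset x :=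
  Real.sInf_nonneg <| by rintro _ ⟨v, -, rfl⟩; exact hℓ0 _ _

theorem lmin_le (hℓ0 : ∀ x u, 0 ≤ ℓ x u) (x : Vec n) {u : Vec m} (hu : u ∈ Uset) :
    lmin ℓ Uset x ≤ ℓ x u :=
  csInf_le ⟨0, by rintro _ ⟨v, -, rfl⟩; exact hℓ0 _ _⟩ (Set.mem_image_of_mem _ hu)

end Lmin

namespace Assumption2

variable {n m : ℕ} {f : Vec n → Vec m → Vec n} {κ : Vec n → Vec m}
  {ℓ : Vec n → Vec m → ℝ} {Z : Set (Vec n × Vec m)} {Uset : Set (Vec m)} {ρ C ε : ℝ}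

theorem loopAdmissible (hA2 : Assumption2 f κ ℓ Z Uset ρ C ε) {y : Vec n}
    (hy : lmin ℓ Uset y ≤ ε) (K : ℕ) : LoopAdmissible f κ Z y K :=
  fun i _ => (hA2.2.2.2 y hy i).2

theorem loopCost_le (hA2 : Assumption2 f κ ℓ Z Uset ρ C ε) (hℓ0 : ∀ x u, 0 ≤ ℓ x u)
    {y : Vec n} (hy : lmin ℓ Uset y ≤ ε) (K : ℕ) :
    loopCost f κ ℓ y K ≤ C / (1 - ρ) * lmin ℓ Uset y := by
  obtain ⟨⟨hρ0, hρ1⟩, hC, -, hdecay⟩ := hA2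
  calc loopCost f κ ℓ y K ≤ ∑ i ∈ range K, C * ρ ^ i * lmin ℓ Uset y :=
        sum_le_sum fun i _ => (hdecay y hy i).1
    _ = C * lmin ℓ Uset y * ∑ i ∈ range K, ρ ^ i := by rw [mul_sum]; ring_nf
    _ ≤ C * lmin ℓ Uset y * (1 / (1 - ρ)) := by
        have hgeom := geom_sum_Ico_le_of_lt_one (m := 0) (n := K) hρ0 hρ1
        rw [← range_eq_Ico, pow_zero] at hgeom
        exact mul_le_mul_of_nonneg_left hgeom
          (mul_nonneg (by linarith) (lmin_nonneg hℓ0 y))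
    _ = C / (1 - ρ) * lmin ℓ Uset y := by ring

/-- Weighting the bounds `ℓ_κ(φ M) ≤ C ρ^(M-k) ℓ_κ(φ k)`, `k < M`, by `ρ^k` and summing. -/
theorem stageCost_mul_one_sub_pow_le (hA2 : Assumption2 f κ ℓ Z Uset ρ C ε)
    (hℓ0 : ∀ x u, 0 ≤ ℓ x u) (hκU : ∀ y, κ y ∈ Uset) {y : Vec n} {M : ℕ}
    (hy : loopCost f κ ℓ y M ≤ ε) :
    ℓ (phiX f κ y M) (κ (phiX f κ y M)) * (1 - ρ ^ M) ≤
      C * ρ ^ M * (1 - ρ) * loopCost f κ ℓ y M := by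
  obtain ⟨⟨hρ0, hρ1⟩, hC, -, hdecay⟩ := hA2
  have hweighted : ℓ (phiX f κ y M) (κ (phiX f κ y M)) * ∑ k ∈ range M, ρ ^ k ≤
      C * ρ ^ M * loopCost f κ ℓ y M := by
    rw [mul_sum, loopCost, mul_sum]
    refine sum_le_sum fun k hk => ?_
    have hkM : k < M := mem_range.mp hk
    have hstage : ℓ (phiX f κ y k) (κ (phiX f κ y k)) ≤ loopCost f κ ℓ y M :=
      single_le_sum (f := fun i => ℓ (phiX f κ y i) (κ (phiX f κ y i)))
        (fun _ _ => hℓ0 _ _) hk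
    have hlmin : lmin ℓ Uset (phiX f κ y k) ≤ ℓ (phiX f κ y k) (κ (phiX f κ y k)) :=
      lmin_le hℓ0 _ (hκU _)
    have h := (hdecay _ (hlmin.trans (hstage.trans hy)) (M - k)).1
    rw [← phiX_add, Nat.add_sub_cancel' hkM.le] at h
    calc ℓ (phiX f κ y M) (κ (phiX f κ y M)) * ρ ^ k
        ≤ C * ρ ^ (M - k) * ℓ (phiX f κ y k) (κ (phiX f κ y k)) * ρ ^ k := by
          gcongr
          exact h.trans (mul_le_mul_of_nonneg_left hlmin (by positivity))
      _ = C * ρ ^ M * ℓ (phiX f κ y k) (κ (phiX f κ y k)) := by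
          rw [← pow_sub_mul_pow ρ hkM.le]; ring
  calc ℓ (phiX f κ y M) (κ (phiX f κ y M)) * (1 - ρ ^ M)
      = ℓ (phiX f κ y M) (κ (phiX f κ y M)) * (∑ k ∈ range M, ρ ^ k) * (1 - ρ) := by
        rw [mul_assoc, geom_sum_mul_neg]
    _ ≤ C * ρ ^ M * loopCost f κ ℓ y M * (1 - ρ) :=
        mul_le_mul_of_nonneg_right hweighted (by linarith)
    _ = C * ρ ^ M * (1 - ρ) * loopCost f κ ℓ y M := by ring

end Assumption2

section CostToGo

variable {n m : ℕ} (f : Vec n → Vec m → Vec n) (κ : Vec n → Vec m)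
  (ℓ : Vec n → Vec m → ℝ)

def costToGo (N M : ℕ) (x : Vec n) (u : ℕ → Vec m) (k : ℕ) : ℝ :=
  ∑ j ∈ Ico k N, ℓ (traj f x u j) (u j) + loopCost f κ ℓ (traj f x u N) M

variable {f κ ℓ} {N M : ℕ} {x : Vec n} {u : ℕ → Vec m}

theorem costToGo_nonneg (hℓ0 : ∀ x u, 0 ≤ ℓ x u) (k : ℕ) : 0 ≤ costToGo f κ ℓ N M x u k :=
  add_nonneg (sum_nonneg fun _ _ => hℓ0 _ _) (loopCost_nonneg hℓ0 _ _)

theorem costToGo_self : costToGo f κ ℓ N M x u N = loopCost f κ ℓ (traj f x u N) M := by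
  simp [costToGo]

theorem costToGo_of_lt {k : ℕ} (hk : k < N) :
    costToGo f κ ℓ N M x u k = ℓ (traj f x u k) (u k) + costToGo f κ ℓ N M x u (k + 1) := by
  rw [costToGo, costToGo, sum_eq_sum_Ico_succ_bot hk, add_assoc]

theorem sum_range_add_costToGo {k : ℕ} (hk : k ≤ N) :
    ∑ j ∈ range k, ℓ (traj f x u j) (u j) + costToGo f κ ℓ N M x u k =
      costToGo f κ ℓ N M x u 0 := by
  rw [costToGo, costToGo, ← add_assoc, sum_range_add_sum_Ico _ hk, range_eq_Ico]

variable {Z : Set (Vec n × Vec m)} {Uset : Set (Vec m)}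

theorem Feasible.Vmpc_succ_le (hℓ0 : ∀ x u, 0 ≤ ℓ x u) (hκU : ∀ y, κ y ∈ Uset)
    (hN : 1 ≤ N) (hu : Feasible f Z Uset N x u)
    (hadm : LoopAdmissible f κ Z (traj f x u N) (M + 1)) :
    Vmpc f κ ℓ Z Uset N M (f x (u 0)) ≤ ENNReal.ofReal (costToGo f κ ℓ N M x u 1 +
      ℓ (phiX f κ (traj f x u N) M) (κ (phiX f κ (traj f x u N) M))) := by
  have hshift (j : ℕ) := traj_shift f x u j
  have hfeas : Feasible f Z Uset (N - 1) (f x (u 0)) (fun j => u (j + 1)) := fun j hj => by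
    rw [hshift]; exact hu (j + 1) (by omega)
  have hlast : N - 1 + 1 = N := by omega
  have hsteps : N - (N - 1) + M = M + 1 := by omega
  have h := hfeas.Vmpc_le_splice (M := M) hℓ0 hκU (Nat.sub_le N 1)
  rw [hshift, hlast, hsteps] at h
  refine h hadm |>.trans_eq ?_
  simp only [hshift]
  rw [loopCost_succ, costToGo, range_eq_Ico, sum_Ico_add' (fun j => ℓ (traj f x u j) (u j)),
    zero_add,
    hlast, add_assoc]

end CostToGo

namespace IsMinimizer

variable {n m : ℕ} {f : Vec n → Vec m → Vec n} {κ : Vec n → Vec m}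
  {ℓ : Vec n → Vec m → ℝ} {Z : Set (Vec n × Vec m)} {Uset : Set (Vec m)} {N M : ℕ}
  {x : Vec n} {u : ℕ → Vec m}

theorem loopAdmissible (hmin : IsMinimizer f κ ℓ Z Uset N M x u)
    (hfin : Vmpc f κ ℓ Z Uset N M x ≠ ⊤) : LoopAdmissible f κ Z (traj f x u N) M := by
  rw [hmin.2, Jcost] at hfin
  exact loopAdmissible_of_Vtail_ne_top (ENNReal.add_ne_top.mp hfin).2

theorem Vmpc_eq (hℓ0 : ∀ x u, 0 ≤ ℓ x u) (hmin : IsMinimizer f κ ℓ Z Uset N M x u)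
    (hfin : Vmpc f κ ℓ Z Uset N M x ≠ ⊤) :
    Vmpc f κ ℓ Z Uset N M x = ENNReal.ofReal (costToGo f κ ℓ N M x u 0) := by
  rw [hmin.2, Jcost, Vtail_of_loopAdmissible (hmin.loopAdmissible hfin), costToGo,
    ← range_eq_Ico, ENNReal.ofReal_add (sum_nonneg fun _ _ => hℓ0 _ _)
      (loopCost_nonneg hℓ0 _ _)]

/-- Bellman's principle of optimality, against the plan that switches to `κ` at step `k`. -/
theorem costToGo_le_loopCost (hℓ0 : ∀ x u, 0 ≤ ℓ x u) (hκU : ∀ y, κ y ∈ Uset)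
    (hmin : IsMinimizer f κ ℓ Z Uset N M x u) (hfin : Vmpc f κ ℓ Z Uset N M x ≠ ⊤)
    {k : ℕ} (hk : k ≤ N) (hadm : LoopAdmissible f κ Z (traj f x u k) (N - k + M)) :
    costToGo f κ ℓ N M x u k ≤ loopCost f κ ℓ (traj f x u k) (N - k + M) := by
  have hfeas : Feasible f Z Uset k x u := fun j hj => hmin.1 j (hj.trans_le hk)
  have h := hfeas.Vmpc_le_splice hℓ0 hκU hk hadm
  rw [hmin.Vmpc_eq hℓ0 hfin, ENNReal.ofReal_le_ofReal_iff (add_nonneg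
    (sum_nonneg fun _ _ => hℓ0 _ _) (loopCost_nonneg hℓ0 _ _)),
    ← sum_range_add_costToGo hk] at h
  linarith

theorem costToGo_le_of_lmin_le {ρ C ε : ℝ} (hA2 : Assumption2 f κ ℓ Z Uset ρ C ε)
    (hℓ0 : ∀ x u, 0 ≤ ℓ x u) (hκU : ∀ y, κ y ∈ Uset)
    (hmin : IsMinimizer f κ ℓ Z Uset N M x u) (hfin : Vmpc f κ ℓ Z Uset N M x ≠ ⊤)
    {k : ℕ} (hk : k ≤ N) (hε : lmin ℓ Uset (traj f x u k) ≤ ε) :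
    costToGo f κ ℓ N M x u k ≤ C / (1 - ρ) * lmin ℓ Uset (traj f x u k) :=
  (hmin.costToGo_le_loopCost hℓ0 hκU hfin hk (hA2.loopAdmissible hε _)).trans
    (hA2.loopCost_le hℓ0 hε _)

/-- Near the origin by `costToGo_le_of_lmin_le`, away from it because `ℓ ≥ ℓ_min > ε`. -/
theorem costToGo_succ_le {ρ C ε γ : ℝ} (hA2 : Assumption2 f κ ℓ Z Uset ρ C ε)
    (hℓ0 : ∀ x u, 0 ≤ ℓ x u) (hκU : ∀ y, κ y ∈ Uset) (hγ : C / (1 - ρ) ≤ γ)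
    (hmin : IsMinimizer f κ ℓ Z Uset N M x u) (hfin : Vmpc f κ ℓ Z Uset N M x ≠ ⊤)
    {k : ℕ} (hk : k < N) :
    costToGo f κ ℓ N M x u (k + 1) ≤
      costToGo f κ ℓ N M x u k - min ε (costToGo f κ ℓ N M x u k / γ) := by
  have hlmin := lmin_le hℓ0 (traj f x u k) (hmin.1 k hk).1
  have hγ0 : 0 < γ := (div_pos (by linarith [hA2.2.1]) (by linarith [hA2.1.2])).trans_le hγ
  have hstage : min ε (costToGo f κ ℓ N M x u k / γ) ≤ ℓ (traj f x u k) (u k) := by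
    rcases le_or_gt (lmin ℓ Uset (traj f x u k)) ε with hnear | hfar
    · refine (min_le_right _ _).trans (hlmin.trans' ?_)
      rw [div_le_iff₀' hγ0]
      exact (hmin.costToGo_le_of_lmin_le hA2 hℓ0 hκU hfin hk.le hnear).trans
        (mul_le_mul_of_nonneg_right hγ (lmin_nonneg hℓ0 _))
    · exact (min_le_left _ _).trans (hfar.le.trans hlmin)
  linarith [costToGo_of_lt (f := f) (κ := κ) (ℓ := ℓ) (M := M) (x := x) (u := u) hk]

end IsMinimizer

section Descent

variable {V : ℕ → ℝ} {ε γ : ℝ} {N : ℕ}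

theorem descent_le_pow_mul (hγ : 1 < γ) (hV0 : ∀ k, 0 ≤ V k)
    (hV : ∀ k < N, V (k + 1) ≤ V k - min ε (V k / γ)) {j : ℕ} (hj : V j ≤ γ * ε) :
    ∀ i, j + i ≤ N → V (j + i) ≤ ((γ - 1) / γ) ^ i * V j := by
  have hq : (γ - 1) / γ ≤ 1 := (div_le_one₀ (by linarith)).mpr (by linarith)
  intro i
  induction i with
  | zero => simp
  | succ i ih =>
    intro hi
    have hprev := ih (by omega)
    have hsmall : V (j + i) / γ ≤ ε := by
      rw [div_le_iff₀' (by linarith)]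
      exact hprev.trans ((mul_le_of_le_one_left (hV0 j) (pow_le_one₀ (by positivity) hq)).trans hj)
    calc V (j + (i + 1)) ≤ V (j + i) - V (j + i) / γ := by
          rw [← min_eq_right hsmall]; exact hV (j + i) (by omega)
      _ = (γ - 1) / γ * V (j + i) := by field_simp
      _ ≤ (γ - 1) / γ * (((γ - 1) / γ) ^ i * V j) := by gcongr
      _ = ((γ - 1) / γ) ^ (i + 1) * V j := by ring

theorem descent_le_max (hγ : 0 < γ) (hε : 0 ≤ ε) (hV0 : ∀ k, 0 ≤ V k)
    (hV : ∀ k < N, V (k + 1) ≤ V k - min ε (V k / γ)) :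
    ∀ k ≤ N, V k ≤ max (min (γ * ε) (V 0)) (V 0 - k * ε) := by
  intro k
  induction k with
  | zero => simp
  | succ k ih =>
    intro hk
    have hprev := ih (by omega)
    have hstep := hV k (by omega)
    have hmin0 : 0 ≤ min ε (V k / γ) := le_min hε (div_nonneg (hV0 k) hγ.le)
    rcases le_or_gt (V k) (γ * ε) with hsmall | hbig
    · refine le_max_of_le_left (le_min (by linarith) ?_)
      have : V k ≤ V 0 := hprev.trans (max_le (min_le_right _ _) (sub_le_self _ (by positivity)))
      linarith
    · have hε_le : ε ≤ V k / γ := by rw [le_div_iff₀' hγ]; exact hbig.le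
      rw [min_eq_left hε_le] at hstep
      have : V k ≤ V 0 - k * ε :=
        (le_max_iff.mp hprev).resolve_left ((min_le_left _ _).trans_lt hbig).not_ge
      push_cast
      exact le_max_of_le_right (by linarith)

theorem descent_le_pow_mul_min (hγ : 1 < γ) (hε : 0 < ε) (hV0 : ∀ k, 0 ≤ V k)
    (hV : ∀ k < N, V (k + 1) ≤ V k - min ε (V k / γ)) {Vbar : ℝ} {N₀ : ℕ} (hbar : V 0 ≤ Vbar)
    (hN₀ : (Vbar - γ * ε) / ε ≤ N₀) (hN₀N : N₀ ≤ N) :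
    V N ≤ ((γ - 1) / γ) ^ (N - N₀) * (min γ (Vbar / ε) * ε) := by
  have hN₀ε : Vbar - γ * ε ≤ N₀ * ε := (div_le_iff₀ hε).mp hN₀
  have hN₀ε0 : 0 ≤ N₀ * ε := by positivity
  have hVN₀ : V N₀ ≤ min γ (Vbar / ε) * ε := by
    rw [min_mul_of_nonneg _ _ hε.le, div_mul_cancel₀ _ hε.ne']
    exact (descent_le_max (by linarith) hε.le hV0 hV N₀ hN₀N).trans
      (max_le (min_le_min le_rfl hbar) (le_min (by linarith) (by linarith)))
  have hdecay := descent_le_pow_mul hγ hV0 hV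
    (hVN₀.trans (mul_le_mul_of_nonneg_right (min_le_left _ _) hε.le)) (N - N₀) (by omega)
  rw [Nat.add_sub_cancel' hN₀N] at hdecay
  exact hdecay.trans (mul_le_mul_of_nonneg_left hVN₀
    (pow_nonneg (div_nonneg (by linarith) (by linarith)) _))

end Descent

theorem pow_mul_le_one_of_log_le {q g : ℝ} {k : ℕ} (hq : 0 < q)
    (hk : Real.log g ≤ k * -Real.log q) : q ^ k * g ≤ 1 := by
  rcases le_or_gt g 0 with hg | hg
  · nlinarith [pow_pos hq k]
  · rw [← Real.log_nonpos_iff (by positivity), Real.log_mul (by positivity) hg.ne',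
      Real.log_pow]
    linarith

theorem lt_and_pow_mul_le_one_of_horizon_lt {γ g a NM : ℝ} {N₀ N : ℕ} (hγ : 1 < γ)
    (hNM : NM = N₀ + max (Real.log g) (max a 0) / (Real.log γ - Real.log (γ - 1)))
    (hN : NM < N) : N₀ < N ∧ ((γ - 1) / γ) ^ (N - N₀) * g ≤ 1 := by
  have hD : 0 < Real.log γ - Real.log (γ - 1) :=
    sub_pos.mpr (Real.log_lt_log (by linarith) (by linarith))
  have hmax : 0 ≤ max (Real.log g) (max a 0) := (le_max_right _ _).trans (le_max_right _ _)
  rw [hNM] at hN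
  have hlog : Real.log g / (Real.log γ - Real.log (γ - 1)) < N - N₀ :=
    (div_le_div_of_nonneg_right (le_max_left _ _) hD.le).trans_lt (lt_sub_iff_add_lt'.mpr hN)
  have hN₀N : N₀ < N := by
    have := div_nonneg hmax hD.le
    exact_mod_cast (show (N₀ : ℝ) < N by linarith)
  refine ⟨hN₀N, pow_mul_le_one_of_log_le (div_pos (by linarith) (by linarith)) ?_⟩
  rw [Nat.cast_sub hN₀N.le, Real.log_div (by linarith) (by linarith), neg_sub]
  exact ((div_lt_iff₀ hD).mp hlog).le

theorem tsum_le_of_succ_add_le {V c : ℕ → ℝ≥0∞} (h : ∀ t, V (t + 1) + c t ≤ V t) :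
    ∑' t, c t ≤ V 0 := by
  have hpartial (K : ℕ) : ∑ t ∈ range K, c t + V K ≤ V 0 := by
    induction K with
    | zero => simp
    | succ K ih =>
      calc ∑ t ∈ range (K + 1), c t + V (K + 1) = ∑ t ∈ range K, c t + (V (K + 1) + c K) := by
            rw [sum_range_succ]; ring
        _ ≤ V 0 := (add_le_add le_rfl (h K)).trans ih
  exact ENNReal.tsum_le_of_sum_range_le fun K => le_self_add.trans (hpartial K)

namespace IsMinimizer

variable {n m : ℕ} {f : Vec n → Vec m → Vec n} {κ : Vec n → Vec m}
  {ℓ : Vec n → Vec m → ℝ} {Z : Set (Vec n × Vec m)} {Uset : Set (Vec m)} {N M : ℕ}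
  {x : Vec n} {u : ℕ → Vec m} {ρ C ε γ Vbar : ℝ} {N₀ : ℕ}

/-- For the second bound: if `ℓ_min(x) ≤ ε`, contract from step `0`; otherwise `ℓ(x, u 0) > ε`. -/
theorem loopCost_terminal_le (hA2 : Assumption2 f κ ℓ Z Uset ρ C ε)
    (hℓ0 : ∀ x u, 0 ≤ ℓ x u) (hκU : ∀ y, κ y ∈ Uset) (hγ : C / (1 - ρ) ≤ γ) (hγ1 : 1 < γ)
    (hVbar : 0 ≤ Vbar) (hN₀ : (Vbar - γ * ε) / ε ≤ N₀) (hN₀N : N₀ < N)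
    (hpow : ((γ - 1) / γ) ^ (N - N₀) * min γ (Vbar / ε) ≤ 1)
    (hmin : IsMinimizer f κ ℓ Z Uset N M x u)
    (hx : Vmpc f κ ℓ Z Uset N M x ≤ ENNReal.ofReal Vbar) :
    loopCost f κ ℓ (traj f x u N) M ≤ ε ∧
      loopCost f κ ℓ (traj f x u N) M ≤ ((γ - 1) / γ) ^ (N - N₀) * γ * ℓ x (u 0) := by
  have hε := hA2.2.2.1
  have hfin : Vmpc f κ ℓ Z Uset N M x ≠ ⊤ := ne_top_of_le_ne_top ENNReal.ofReal_ne_top hx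
  have hV0 := costToGo_nonneg (f := f) (κ := κ) (N := N) (M := M) (x := x) (u := u) hℓ0
  have hdesc := fun k (hk : k < N) => hmin.costToGo_succ_le hA2 hℓ0 hκU hγ hfin hk
  have hbar : costToGo f κ ℓ N M x u 0 ≤ Vbar := by
    rwa [hmin.Vmpc_eq hℓ0 hfin, ENNReal.ofReal_le_ofReal_iff hVbar] at hx
  have hVN := descent_le_pow_mul_min hγ1 hε hV0 hdesc hbar hN₀ hN₀N.le
  rw [costToGo_self] at hVN
  have hq : 0 ≤ (γ - 1) / γ := div_nonneg (by linarith) (by linarith)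
  refine ⟨hVN.trans ?_, ?_⟩
  · calc _ = ((γ - 1) / γ) ^ (N - N₀) * min γ (Vbar / ε) * ε := by ring
      _ ≤ 1 * ε := by gcongr
      _ = ε := one_mul ε
  have hlmin : lmin ℓ Uset x ≤ ℓ x (u 0) := lmin_le hℓ0 x (hmin.1 0 (by omega)).1
  rcases le_or_gt (lmin ℓ Uset x) ε with hnear | hfar
  · have h0 : costToGo f κ ℓ N M x u 0 ≤ γ * ℓ x (u 0) :=
      (hmin.costToGo_le_of_lmin_le hA2 hℓ0 hκU hfin (Nat.zero_le N) hnear).trans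
        (mul_le_mul hγ hlmin (lmin_nonneg hℓ0 x) (by linarith))
    have h0ε : costToGo f κ ℓ N M x u 0 ≤ γ * ε :=
      (hmin.costToGo_le_of_lmin_le hA2 hℓ0 hκU hfin (Nat.zero_le N) hnear).trans
        (mul_le_mul hγ hnear (lmin_nonneg hℓ0 x) (by linarith))
    have hN := descent_le_pow_mul hγ1 hV0 hdesc h0ε N (by omega)
    rw [zero_add, costToGo_self] at hN
    calc _ ≤ ((γ - 1) / γ) ^ N * costToGo f κ ℓ N M x u 0 := hN
      _ ≤ ((γ - 1) / γ) ^ (N - N₀) * (γ * ℓ x (u 0)) :=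
          mul_le_mul (pow_le_pow_of_le_one hq (by rw [div_le_one₀ (by linarith)]; linarith)
            (Nat.sub_le N N₀)) h0 (hV0 0) (pow_nonneg hq _)
      _ = _ := by ring
  · calc _ ≤ _ := hVN
      _ ≤ ((γ - 1) / γ) ^ (N - N₀) * (γ * ℓ x (u 0)) :=
          mul_le_mul_of_nonneg_left
            (mul_le_mul (min_le_left _ _) (hfar.le.trans hlmin) hε.le (by linarith))
            (pow_nonneg hq _)
      _ = _ := by ring

theorem Vmpc_succ_add_le {εNM : ℝ} (hA2 : Assumption2 f κ ℓ Z Uset ρ C ε)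
    (hℓ0 : ∀ x u, 0 ≤ ℓ x u) (hκU : ∀ y, κ y ∈ Uset) (hγ : γ = C / (1 - ρ)) (hγ1 : 1 < γ)
    (hVbar : 0 ≤ Vbar) (hN₀ : (Vbar - γ * ε) / ε ≤ N₀) (hN₀N : N₀ < N)
    (hpow : ((γ - 1) / γ) ^ (N - N₀) * min γ (Vbar / ε) ≤ 1) (hM : 1 ≤ M)
    (hεNM : εNM = 1 - C ^ 2 * ((γ - 1) / γ) ^ (N - N₀) * ρ ^ M / (1 - ρ ^ M))
    (hεNM0 : 0 ≤ εNM) (hmin : IsMinimizer f κ ℓ Z Uset N M x u)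
    (hx : Vmpc f κ ℓ Z Uset N M x ≤ ENNReal.ofReal Vbar) :
    Vmpc f κ ℓ Z Uset N M (f x (u 0)) + ENNReal.ofReal (εNM * ℓ x (u 0)) ≤
      Vmpc f κ ℓ Z Uset N M x := by
  obtain ⟨hρ0, hρ1⟩ := hA2.1
  obtain ⟨hTε, hTL⟩ := hmin.loopCost_terminal_le hA2 hℓ0 hκU hγ.ge hγ1 hVbar hN₀ hN₀N hpow hx
  set y := traj f x u N
  have hlast : ℓ (phiX f κ y M) (κ (phiX f κ y M)) ≤ (1 - εNM) * ℓ x (u 0) := by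
    have hρM : 0 < 1 - ρ ^ M := sub_pos.mpr (pow_lt_one₀ hρ0 hρ1 (by omega))
    rw [hεNM, sub_sub_cancel, div_mul_eq_mul_div, le_div_iff₀ hρM]
    calc _ ≤ C * ρ ^ M * (1 - ρ) * loopCost f κ ℓ y M :=
          hA2.stageCost_mul_one_sub_pow_le hℓ0 hκU hTε
      _ ≤ C * ρ ^ M * (1 - ρ) * (((γ - 1) / γ) ^ (N - N₀) * γ * ℓ x (u 0)) :=
          mul_le_mul_of_nonneg_left hTL
            (mul_nonneg (mul_nonneg (by linarith [hA2.2.1]) (pow_nonneg hρ0 _)) (by linarith))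
      _ = _ := by rw [hγ]; field_simp
  have hy : ℓ y (κ y) ≤ loopCost f κ ℓ y M :=
    single_le_sum (f := fun i => ℓ (phiX f κ y i) (κ (phiX f κ y i)))
      (fun _ _ => hℓ0 _ _) (mem_range.mpr hM)
  have hadm := hA2.loopAdmissible ((lmin_le hℓ0 y (hκU y)).trans (hy.trans hTε)) (M + 1)
  have hfin : Vmpc f κ ℓ Z Uset N M x ≠ ⊤ := ne_top_of_le_ne_top ENNReal.ofReal_ne_top hx
  have hnext := hmin.1.Vmpc_succ_le hℓ0 hκU (by omega) hadm
  have htraj0 : traj f x u 0 = x := rfl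
  rw [hmin.Vmpc_eq hℓ0 hfin, costToGo_of_lt (by omega : 0 < N), zero_add, htraj0]
  calc _ ≤ ENNReal.ofReal (costToGo f κ ℓ N M x u 1 + ℓ (phiX f κ y M) (κ (phiX f κ y M))) +
        ENNReal.ofReal (εNM * ℓ x (u 0)) := add_le_add_left hnext _
    _ = ENNReal.ofReal (costToGo f κ ℓ N M x u 1 + ℓ (phiX f κ y M) (κ (phiX f κ y M)) +
        εNM * ℓ x (u 0)) :=
        (ENNReal.ofReal_add (add_nonneg (costToGo_nonneg hℓ0 1) (hℓ0 _ _))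
          (mul_nonneg hεNM0 (hℓ0 _ _))).symm
    _ ≤ _ := ENNReal.ofReal_le_ofReal (by linarith)

end IsMinimizer

theorem closed_loop_performance_general {n m : ℕ}
    (f : Vec n → Vec m → Vec n) (κ : Vec n → Vec m) (ℓ : Vec n → Vec m → ℝ)
    (Z : Set (Vec n × Vec m)) (Uset : Set (Vec m)) (ρ C ε : ℝ)
    (hℓ0 : ∀ x u, 0 ≤ ℓ x u)
    (hκU : ∀ x, κ x ∈ Uset)
    (hA2 : Assumption2 f κ ℓ Z Uset ρ C ε)
    (Vbar γ ργ γlow NM : ℝ) (hVbar : 0 < Vbar) (hγ : γ = C / (1 - ρ)) (hγ1 : 1 < γ)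
    (hργ : ργ = (γ - 1) / γ) (hγlow : γlow = min γ (Vbar / ε))
    (N₀ : ℕ) (hN₀ : N₀ = ⌈max 0 ((Vbar - γ * ε) / ε)⌉₊)
    (M : ℕ) (hM : 1 ≤ M)
    (hNM : NM = N₀ + max (Real.log γlow)
        (max (Real.log (C ^ 2 * ρ ^ M / (1 - ρ ^ M))) 0) /
        (Real.log γ - Real.log (γ - 1)))
    (N : ℕ) (hN : NM < N) (εNM : ℝ)
    (hεNM : εNM = 1 - C ^ 2 * ργ ^ (N - N₀) * ρ ^ M / (1 - ρ ^ M)) (hεpos : 0 < εNM)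
    (x₀ : Vec n) (hx₀ : Vmpc f κ ℓ Z Uset N M x₀ ≤ ENNReal.ofReal Vbar)
    (xcl : ℕ → Vec n) (ustar : ℕ → ℕ → Vec m) (hinit : xcl 0 = x₀)
    (hopt : ∀ t, IsMinimizer f κ ℓ Z Uset N M (xcl t) (ustar t))
    (hstep : ∀ t, xcl (t + 1) = f (xcl t) (ustar t 0)) :
    ∑' k : ℕ, ENNReal.ofReal (ℓ (xcl k) (ustar k 0)) ≤
      Vmpc f κ ℓ Z Uset N M x₀ / ENNReal.ofReal εNM := by
  subst hργ hγlow hinit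
  have hN₀' : (Vbar - γ * ε) / ε ≤ N₀ := hN₀ ▸ (le_max_right _ _).trans (Nat.le_ceil _)
  obtain ⟨hN₀N, hpow⟩ := lt_and_pow_mul_le_one_of_horizon_lt hγ1 hNM hN
  have hdecrease (t : ℕ) (ht : Vmpc f κ ℓ Z Uset N M (xcl t) ≤ ENNReal.ofReal Vbar) :
      Vmpc f κ ℓ Z Uset N M (xcl (t + 1)) + ENNReal.ofReal (εNM * ℓ (xcl t) (ustar t 0)) ≤
        Vmpc f κ ℓ Z Uset N M (xcl t) :=
    hstep t ▸ (hopt t).Vmpc_succ_add_le hA2 hℓ0 hκU hγ hγ1 hVbar.le hN₀' hN₀N hpow hM hεNM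
      hεpos.le ht
  have hbounded (t : ℕ) : Vmpc f κ ℓ Z Uset N M (xcl t) ≤ ENNReal.ofReal Vbar := by
    induction t with
    | zero => exact hx₀
    | succ t ih => exact le_self_add.trans ((hdecrease t ih).trans ih)
  have hsum := tsum_le_of_succ_add_le fun t => hdecrease t (hbounded t)
  simp only [ENNReal.ofReal_mul hεpos.le, ENNReal.tsum_mul_left] at hsum
  rwa [ENNReal.le_div_iff_mul_le (Or.inl (ENNReal.ofReal_pos.mpr hεpos).ne')
    (Or.inl ENNReal.ofReal_ne_top), mul_comm]

/-- Theorem 1, closed-loop performance bound: under Assumptions 1 and 2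
with `ρ > 0`, `γ = C/(1-ρ) > 1` and `N > N_M` (so `ε_{N,M} > 0`), every closed loop
generated by minimizing input sequences from `x₀` with `V_{N,M}(x₀) ≤ V̄` satisfies
`Σ_{k=0}^∞ ℓ(x(k), u(k)) ≤ V_{N,M}(x₀)/ε_{N,M}`. -/
theorem closed_loop_performance {n m : ℕ}
    (f : Vec n → Vec m → Vec n) (κ : Vec n → Vec m) (ℓ : Vec n → Vec m → ℝ)
    (Z : Set (Vec n × Vec m)) (Uset : Set (Vec m)) (ρ C ε : ℝ)
    (hf : Continuous fun p : Vec n × Vec m => f p.1 p.2) (hf0 : f 0 0 = 0)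
    (hℓ : Continuous fun p : Vec n × Vec m => ℓ p.1 p.2) (hℓ0 : ∀ x u, 0 ≤ ℓ x u)
    (hZ0 : ((0 : Vec n), (0 : Vec m)) ∈ interior Z) (hU : IsCompact Uset)
    (hκ : Continuous κ) (hκU : ∀ x, κ x ∈ Uset)
    (αlow αup : ℝ → ℝ) (hαlow : IsKInfty αlow) (hαup : IsKInfty αup)
    (hA1 : ∀ x : Vec n, αlow ‖x‖ ≤ lmin ℓ Uset x ∧ lmin ℓ Uset x ≤ αup ‖x‖)
    (hℓ00 : ℓ 0 0 = 0)
    (hA2 : Assumption2 f κ ℓ Z Uset ρ C ε) (hρpos : 0 < ρ)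
    (Vbar γ ργ γlow NM : ℝ) (hVbar : 0 < Vbar) (hγ : γ = C / (1 - ρ)) (hγ1 : 1 < γ)
    (hργ : ργ = (γ - 1) / γ) (hγlow : γlow = min γ (Vbar / ε))
    (N₀ : ℕ) (hN₀ : N₀ = ⌈max 0 ((Vbar - γ * ε) / ε)⌉₊)
    (M : ℕ) (hM : 1 ≤ M)
    (hNM : NM = N₀ + max (Real.log γlow)
        (max (Real.log (C ^ 2 * ρ ^ M / (1 - ρ ^ M))) 0) /
        (Real.log γ - Real.log (γ - 1)))
    (N : ℕ) (hN : NM < N) (εNM : ℝ)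
    (hεNM : εNM = 1 - C ^ 2 * ργ ^ (N - N₀) * ρ ^ M / (1 - ρ ^ M)) (hεpos : 0 < εNM)
    (x₀ : Vec n) (hx₀ : Vmpc f κ ℓ Z Uset N M x₀ ≤ ENNReal.ofReal Vbar)
    (xcl : ℕ → Vec n) (ustar : ℕ → ℕ → Vec m) (hinit : xcl 0 = x₀)
    (hopt : ∀ t, IsMinimizer f κ ℓ Z Uset N M (xcl t) (ustar t))
    (hstep : ∀ t, xcl (t + 1) = f (xcl t) (ustar t 0)) :
    ∑' k : ℕ, ENNReal.ofReal (ℓ (xcl k) (ustar k 0)) ≤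
      Vmpc f κ ℓ Z Uset N M x₀ / ENNReal.ofReal εNM :=
  closed_loop_performance_general f κ ℓ Z Uset ρ C ε hℓ0 hκU hA2 Vbar γ ργ γlow NM hVbar hγ hγ1 hργ
    hγlow N₀ hN₀ M hM hNM N hN εNM hεNM hεpos x₀ hx₀ xcl ustar hinit hopt hstep
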